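/- Let Z ~ Gamma(α) with 0 < α ≤ γ. Then the function φ(y) = P(Z^γ ≤ y) is concave on (0, ∞). -/

import Mathlib

open MeasureTheory ProbabilityTheory Real Finset

noncomputable section

variable {Ω : Type*} [MeasurableSpace Ω]

/-- `X ~ Pareto(α)` : cdf `1 - x^(-α)` for `x ≥ 1`. -/
def IsPareto (P : Measure Ω) (α : ℝ) (X : Ω → ℝ) : Prop :=
  Measurable X ∧ (∀ x : ℝ, 1 ≤ x → P {ω | x < X ω} = ENNReal.ofReal (x ^ (-α))) ∧
    P {ω | X ω < 1} = 0

/-- the increasing rearrangement of a vector -/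
def sortedVec {n : ℕ} (f : Fin n → ℝ) : Fin n → ℝ := f ∘ Tuple.sort f

/-- `MajorizedBy θ η` : `θ ⪯ η`, i.e. equal sums and the sum of the `k` smallest
components of `θ` is at least that of `η` for each `k`. -/
def MajorizedBy {n : ℕ} (θ η : Fin n → ℝ) : Prop :=
  (∑ i, θ i = ∑ i, η i) ∧
  ∀ k : ℕ, k ≤ n →
    ∑ i ∈ Finset.univ.filter (fun i : Fin n => (i : ℕ) < k), sortedVec η i ≤
    ∑ i ∈ Finset.univ.filter (fun i : Fin n => (i : ℕ) < k), sortedVec θ i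

/-! For `y > 0`, `P(Z ^ γ ≤ y) = F(y ^ (1/γ))` with `F` the Gamma cdf, whose derivative is the
Gamma density. By the chain rule the derivative in `y` is a positive multiple of
`y ^ (α/γ - 1) * exp (-y ^ (1/γ))`, which is nonincreasing since `α ≤ γ`; a function with
nonincreasing derivative is concave. -/

theorem concaveOn_of_hasDerivAt_of_antitoneOn {s : Set ℝ} (hs : Convex ℝ s) (hso : IsOpen s)
    {f f' : ℝ → ℝ} (hf : ∀ x ∈ s, HasDerivAt f (f' x) x) (hf' : AntitoneOn f' s) :
    ConcaveOn ℝ s f := by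
  refine AntitoneOn.concaveOn_of_deriv hs
    (fun x hx => (hf x hx).continuousAt.continuousWithinAt) ?_ ?_ <;> rw [hso.interior_eq]
  · exact fun x hx => (hf x hx).differentiableAt.differentiableWithinAt
  · exact hf'.congr fun x hx => ((hf x hx).deriv).symm

theorem hasDerivAt_integral_Iic {f : ℝ → ℝ} {t : ℝ} (hf : Integrable f)
    (hft : ContinuousAt f t) :
    HasDerivAt (fun x => ∫ y in Set.Iic x, f y) (f t) t := by
  have h : (fun x => ∫ y in Set.Iic x, f y) =
      fun x => (∫ y in Set.Iic 0, f y) + ∫ y in 0..x, f y := by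
    funext x
    rw [← intervalIntegral.integral_Iic_sub_Iic hf.integrableOn hf.integrableOn]
    ring
  rw [h]
  exact (intervalIntegral.integral_hasDerivAt_right hf.intervalIntegrable
    hf.aestronglyMeasurable.stronglyMeasurableAtFilter hft).const_add _

theorem measure_rpow_le_eq_measure_Iic {μ : Measure ℝ} (hμ : μ (Set.Iio 0) = 0) {γ y : ℝ}
    (hγ : 0 < γ) (hy : 0 ≤ y) : μ {x | x ^ γ ≤ y} = μ (Set.Iic (y ^ γ⁻¹)) := by
  refine measure_congr ?_
  have hnonneg : ∀ᵐ x ∂μ, 0 ≤ x := by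
    simpa using measure_eq_zero_iff_ae_notMem.1 hμ
  filter_upwards [hnonneg] with x hx
  exact propext (le_rpow_inv_iff_of_pos hx hy hγ).symm

theorem antitoneOn_rpow_mul_exp_neg_mul_rpow {p q r : ℝ} (hp : p ≤ 0) (hq : 0 ≤ q)
    (hr : 0 ≤ r) :
    AntitoneOn (fun x : ℝ => x ^ p * exp (-(r * x ^ q))) (Set.Ioi 0) := by
  intro x (hx : 0 < x) y _ hxy
  exact mul_le_mul (rpow_le_rpow_of_nonpos hx hxy hp)
    (exp_le_exp.2 (neg_le_neg (mul_le_mul_of_nonneg_left (rpow_le_rpow hx.le hxy hq) hr)))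
    (exp_pos _).le (rpow_nonneg hx.le _)

namespace ProbabilityTheory

variable {a r : ℝ}

theorem gammaMeasure_Iio_zero : gammaMeasure a r (Set.Iio 0) = 0 := by
  rw [gammaMeasure, withDensity_apply _ measurableSet_Iio, lintegral_gammaPDF_of_nonpos le_rfl]

theorem integrable_gammaPDFReal (ha : 0 < a) (hr : 0 < r) : Integrable (gammaPDFReal a r) := by
  refine ⟨(measurable_gammaPDFReal a r).aestronglyMeasurable, ?_⟩
  rw [hasFiniteIntegral_iff_ofReal (ae_of_all _ (gammaPDFReal_nonneg ha hr))]
  exact (lintegral_gammaPDF_eq_one ha hr).trans_lt ENNReal.one_lt_top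

theorem continuousAt_gammaPDFReal {x : ℝ} (hx : 0 < x) : ContinuousAt (gammaPDFReal a r) x := by
  have heq : ∀ᶠ y in nhds x,
      r ^ a / Gamma a * y ^ (a - 1) * exp (-(r * y)) = gammaPDFReal a r y := by
    filter_upwards [Ioi_mem_nhds hx] with y (hy : 0 < y)
    rw [gammaPDFReal, if_pos hy.le]
  refine ContinuousAt.congr ?_ heq
  fun_prop (disch := exact Or.inl hx.ne')

theorem hasDerivAt_cdf_gammaMeasure (ha : 0 < a) (hr : 0 < r) {x : ℝ} (hx : 0 < x) :
    HasDerivAt (cdf (gammaMeasure a r)) (gammaPDFReal a r x) x := by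
  rw [show ⇑(cdf (gammaMeasure a r)) = fun x => ∫ y in Set.Iic x, gammaPDFReal a r y from
    funext (cdf_gammaMeasure_eq_integral ha hr)]
  exact hasDerivAt_integral_Iic (integrable_gammaPDFReal ha hr) (continuousAt_gammaPDFReal hx)

theorem hasDerivAt_cdf_gammaMeasure_rpow_inv (ha : 0 < a) (hr : 0 < r) (γ : ℝ) {x : ℝ}
    (hx : 0 < x) :
    HasDerivAt (fun y => cdf (gammaMeasure a r) (y ^ γ⁻¹))
      (r ^ a / Gamma a / γ * (x ^ (a / γ - 1) * exp (-(r * x ^ γ⁻¹)))) x := by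
  refine ((hasDerivAt_cdf_gammaMeasure ha hr (rpow_pos_of_pos hx γ⁻¹)).comp x
    (hasDerivAt_rpow_const (p := γ⁻¹) (Or.inl hx.ne'))).congr_deriv ?_
  rw [gammaPDFReal, if_pos (rpow_nonneg hx.le _), ← rpow_mul hx.le,
    show a / γ - 1 = γ⁻¹ * (a - 1) + (γ⁻¹ - 1) by ring, rpow_add hx]
  ring

theorem concaveOn_cdf_gammaMeasure_rpow_inv (ha : 0 < a) (hr : 0 < r) {γ : ℝ} (haγ : a ≤ γ) :
    ConcaveOn ℝ (Set.Ioi 0) (fun y => cdf (gammaMeasure a r) (y ^ γ⁻¹)) := by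
  have hγ : 0 < γ := ha.trans_le haγ
  refine concaveOn_of_hasDerivAt_of_antitoneOn (convex_Ioi 0) isOpen_Ioi
    (fun x hx => hasDerivAt_cdf_gammaMeasure_rpow_inv ha hr γ hx) ?_
  have hanti := antitoneOn_rpow_mul_exp_neg_mul_rpow (r := r) (p := a / γ - 1)
    (by rw [sub_nonpos, div_le_one hγ]; exact haγ) (inv_nonneg.2 hγ.le) hr.le
  exact fun x hx y hy hxy => mul_le_mul_of_nonneg_left (hanti hx hy hxy) (by positivity)

end ProbabilityTheory

theorem stmt_19 (P : Measure Ω)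
    (α γ : ℝ) (hα : 0 < α) (hαγ : α ≤ γ)
    (Z : Ω → ℝ) (hZm : Measurable Z) (hZ : Measure.map Z P = gammaMeasure α 1) :
    ConcaveOn ℝ (Set.Ioi 0) (fun y : ℝ => (P {ω | Z ω ^ γ ≤ y}).toReal) := by
  have := isProbabilityMeasure_gammaMeasure hα one_pos
  refine (concaveOn_cdf_gammaMeasure_rpow_inv hα one_pos hαγ).congr fun y (hy : 0 < y) => ?_
  dsimp only
  have hS : MeasurableSet {x : ℝ | x ^ γ ≤ y} :=
    measurableSet_le (measurable_id.pow_const γ) measurable_const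
  rw [cdf_eq_real, measureReal_def, ← measure_rpow_le_eq_measure_Iic gammaMeasure_Iio_zero
    (hα.trans_le hαγ) hy.le, ← hZ, Measure.map_apply hZm hS]
  rfl
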